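/- arXiv:2310.05285 — 2 statements merged into one kernel-verified Lean document; each statement's English description precedes it below -/
import Mathlib

section
/- (Lemma 3.1) Let (V_k)_{k≥1} and (Z_k)_{k≥1} be sequences of linear subspaces of ℝⁿ with V_k ⊆ V_{k+1} and Z_k ⊆ Z_{k+1} for all k. Let (x_0, ξ_0) ∈ V_1 × Z_1, and suppose that for each k ≥ 1 the pair (x_k, ξ_k) minimizes the surrogate φ^{ξ_{k−1}} over V_k × Z_k (i.e., x_k ∈ V_k, ξ_k ∈ Z_k, and φ^{ξ_{k−1}}(x_k, ξ_k) ≤ φ^{ξ_{k−1}}(x, ξ) for all x ∈ V_k, ξ ∈ Z_k). Then the sequence (φ(x_k, ξ_k))_{k≥0} is nonincreasing and bounded below by zero: 0 ≤ φ(x_k, ξ_k) ≤ φ(x_{k−1}, ξ_{k−1}) for all k ≥ 1. -/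
open scoped BigOperators

/-- Weighted squared norm `‖v‖²_M = vᵀ M v`. -/
noncomputable def wnormSq {m : ℕ} (M : Matrix (Fin m) (Fin m) ℝ) (v : Fin m → ℝ) : ℝ :=
  dotProduct v (M.mulVec v)

/-- The smoothed objective
`φ(x, ξ) = ‖A Q x + A ξ − b‖²_{R⁻¹} + λx² ‖x‖²_Q + λξ² Σᵢ √(ξᵢ² + τ²)`. -/
noncomputable def phi {m n : ℕ} (A : Matrix (Fin m) (Fin n) ℝ) (b : Fin m → ℝ)
    (R : Matrix (Fin m) (Fin m) ℝ) (Q : Matrix (Fin n) (Fin n) ℝ)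
    (lx lξ τ : ℝ) (x ξ : Fin n → ℝ) : ℝ :=
  wnormSq R⁻¹ (A.mulVec (Q.mulVec x) + A.mulVec ξ - b) + lx ^ 2 * wnormSq Q x
    + lξ ^ 2 * ∑ i, Real.sqrt ((ξ i) ^ 2 + τ ^ 2)

/-- The quadratic surrogate
`φ^ζ(x, ξ) = ‖A Q x + A ξ − b‖²_{R⁻¹} + λx² ‖x‖²_Q
  + λξ² Σᵢ [ (ξᵢ² + τ²)/(2 √(ζᵢ² + τ²)) + √(ζᵢ² + τ²)/2 ]`. -/
noncomputable def phiSur {m n : ℕ} (A : Matrix (Fin m) (Fin n) ℝ) (b : Fin m → ℝ)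
    (R : Matrix (Fin m) (Fin m) ℝ) (Q : Matrix (Fin n) (Fin n) ℝ)
    (lx lξ τ : ℝ) (ζ x ξ : Fin n → ℝ) : ℝ :=
  wnormSq R⁻¹ (A.mulVec (Q.mulVec x) + A.mulVec ξ - b) + lx ^ 2 * wnormSq Q x
    + lξ ^ 2 * ∑ i, (((ξ i) ^ 2 + τ ^ 2) / (2 * Real.sqrt ((ζ i) ^ 2 + τ ^ 2))
        + Real.sqrt ((ζ i) ^ 2 + τ ^ 2) / 2)

lemma wnormSq_nonneg' {m : ℕ} {M : Matrix (Fin m) (Fin m) ℝ} (hM : M.PosSemidef)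
    (v : Fin m → ℝ) : 0 ≤ wnormSq M v := by
  have := hM.re_dotProduct_nonneg v
  simpa [wnormSq, dotProduct, RCLike.re] using this

lemma sqrt_le_sur (s t τ : ℝ) (hτ : 0 < τ) :
    Real.sqrt (s ^ 2 + τ ^ 2) ≤
      (s ^ 2 + τ ^ 2) / (2 * Real.sqrt (t ^ 2 + τ ^ 2)) + Real.sqrt (t ^ 2 + τ ^ 2) / 2 := by
  set a := Real.sqrt (s ^ 2 + τ ^ 2) with ha
  set b := Real.sqrt (t ^ 2 + τ ^ 2) with hb
  have hbpos : 0 < b := Real.sqrt_pos.2 (by positivity)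
  have ha2 : a ^ 2 = s ^ 2 + τ ^ 2 := Real.sq_sqrt (by positivity)
  rw [← ha2]
  rw [div_add_div _ _ (by positivity) (by norm_num : (2:ℝ) ≠ 0), le_div_iff₀ (by positivity)]
  nlinarith [sq_nonneg (a - b), hbpos]

lemma sur_eq_phi {m n : ℕ} (A : Matrix (Fin m) (Fin n) ℝ) (b : Fin m → ℝ)
    (R : Matrix (Fin m) (Fin m) ℝ) (Q : Matrix (Fin n) (Fin n) ℝ)
    (lx lξ τ : ℝ) (hτ : 0 < τ) (x ζ : Fin n → ℝ) :
    phiSur A b R Q lx lξ τ ζ x ζ = phi A b R Q lx lξ τ x ζ := by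
  unfold phiSur phi
  congr 1
  congr 1
  refine Finset.sum_congr rfl fun i _ => ?_
  have hpos : 0 < Real.sqrt ((ζ i) ^ 2 + τ ^ 2) := Real.sqrt_pos.2 (by positivity)
  have h2 : Real.sqrt ((ζ i) ^ 2 + τ ^ 2) ^ 2 = (ζ i) ^ 2 + τ ^ 2 :=
    Real.sq_sqrt (by positivity)
  field_simp
  nlinarith [h2]

lemma phi_le_sur {m n : ℕ} (A : Matrix (Fin m) (Fin n) ℝ) (b : Fin m → ℝ)
    (R : Matrix (Fin m) (Fin m) ℝ) (Q : Matrix (Fin n) (Fin n) ℝ)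
    (lx lξ τ : ℝ) (hlξ : 0 < lξ) (hτ : 0 < τ) (ζ x ξ : Fin n → ℝ) :
    phi A b R Q lx lξ τ x ξ ≤ phiSur A b R Q lx lξ τ ζ x ξ := by
  unfold phi phiSur
  gcongr with i hi
  exact sqrt_le_sur _ _ _ hτ

lemma phi_nonneg {m n : ℕ} (A : Matrix (Fin m) (Fin n) ℝ) (b : Fin m → ℝ)
    (R : Matrix (Fin m) (Fin m) ℝ) (Q : Matrix (Fin n) (Fin n) ℝ)
    (hR : R.PosDef) (hQ : Q.PosDef) (lx lξ τ : ℝ) (hτ : 0 < τ) (x ξ : Fin n → ℝ) :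
    0 ≤ phi A b R Q lx lξ τ x ξ := by
  have h1 := wnormSq_nonneg' hR.inv.posSemidef (A.mulVec (Q.mulVec x) + A.mulVec ξ - b)
  have h2 := wnormSq_nonneg' hQ.posSemidef x
  have h3 : 0 ≤ ∑ i, Real.sqrt ((ξ i) ^ 2 + τ ^ 2) :=
    Finset.sum_nonneg fun i _ => Real.sqrt_nonneg _
  unfold phi
  positivity

/-- Lemma 3.1: monotone decrease of `φ(x_k, ξ_k)` along subspace-constrained
majorization-minimization iterates with nested subspaces. -/
theorem lemma_3_1_monotone_decrease (m n : ℕ) (hm : 0 < m) (hn : 0 < n)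
    (A : Matrix (Fin m) (Fin n) ℝ) (b : Fin m → ℝ)
    (R : Matrix (Fin m) (Fin m) ℝ) (Q : Matrix (Fin n) (Fin n) ℝ)
    (hR : R.PosDef) (hQ : Q.PosDef) (lx lξ τ : ℝ)
    (hlx : 0 < lx) (hlξ : 0 < lξ) (hτ : 0 < τ)
    (V Z : ℕ → Submodule ℝ (Fin n → ℝ))
    (hV : ∀ k, V k ≤ V (k + 1)) (hZ : ∀ k, Z k ≤ Z (k + 1))
    (x ξ : ℕ → Fin n → ℝ)
    (hx0 : x 0 ∈ V 1) (hξ0 : ξ 0 ∈ Z 1)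
    (hmem : ∀ k, 1 ≤ k → x k ∈ V k ∧ ξ k ∈ Z k)
    (hmin : ∀ k, 1 ≤ k → ∀ x' ∈ V k, ∀ ξ' ∈ Z k,
      phiSur A b R Q lx lξ τ (ξ (k - 1)) (x k) (ξ k) ≤
        phiSur A b R Q lx lξ τ (ξ (k - 1)) x' ξ') :
    ∀ k, 1 ≤ k →
      0 ≤ phi A b R Q lx lξ τ (x k) (ξ k) ∧
      phi A b R Q lx lξ τ (x k) (ξ k) ≤ phi A b R Q lx lξ τ (x (k - 1)) (ξ (k - 1)) := by
  intro k hk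
  refine ⟨phi_nonneg A b R Q hR hQ lx lξ τ hτ _ _, ?_⟩
  have hxk1 : x (k - 1) ∈ V k ∧ ξ (k - 1) ∈ Z k := by
    rcases Nat.exists_eq_add_of_le hk with ⟨j, rfl⟩
    cases j with
    | zero => exact ⟨hx0, hξ0⟩
    | succ j =>
      have h := hmem (1 + j) (by omega)
      have e : 1 + (j + 1) - 1 = 1 + j := by omega
      rw [e]
      exact ⟨hV (1 + j) h.1, hZ (1 + j) h.2⟩
  calc phi A b R Q lx lξ τ (x k) (ξ k)
      ≤ phiSur A b R Q lx lξ τ (ξ (k - 1)) (x k) (ξ k) :=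
        phi_le_sur A b R Q lx lξ τ hlξ hτ _ _ _
    _ ≤ phiSur A b R Q lx lξ τ (ξ (k - 1)) (x (k - 1)) (ξ (k - 1)) :=
        hmin k hk _ hxk1.1 _ hxk1.2
    _ = phi A b R Q lx lξ τ (x (k - 1)) (ξ (k - 1)) := sur_eq_phi A b R Q lx lξ τ hτ _ _
end

section
/- Suppose: (i) V̂ is an m×p real matrix with V̂ᵀ R⁻¹ V̂ = I_p; (ii) Ẑ is an n×q real matrix and H is a p×q real matrix with A Ẑ = V̂ H; (iii) b = β · V̂ e₁ for a real scalar β, where e₁ is the first standard basis vector of ℝ^p; (iv) V and Ṽ are n×k real matrices and H̃ is a k×k real matrix with V = Ṽ H̃ and Ṽᵀ Q Ṽ = I_k; (v) G and Q' are n×j real matrices and R' is a j×j real matrix with G = Q' R' and Q'ᵀ Q' = I_j. Then for all y ∈ ℝ^q, y¹ ∈ ℝ^k, y² ∈ ℝ^j: ‖A Ẑ y − b‖²_{R⁻¹} + λx² ‖V y¹‖²_Q + λξ² ‖G y²‖₂² = ‖H y − β e₁‖₂² + λx² ‖H̃ y¹‖₂² + λξ² ‖R' y²‖₂², where ‖·‖₂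 denotes the Euclidean norm. -/
open scoped BigOperators Matrix

lemma key_iso {a b : ℕ} (S : Matrix (Fin a) (Fin a) ℝ) (M : Matrix (Fin a) (Fin b) ℝ)
    (h : Mᵀ * S * M = 1) (w : Fin b → ℝ) :
    dotProduct (M.mulVec w) (S.mulVec (M.mulVec w)) = ∑ i, (w i) ^ 2 := by
  have : dotProduct (M.mulVec w) (S.mulVec (M.mulVec w))
      = dotProduct w ((Mᵀ * S * M).mulVec w) := by
    rw [Matrix.dotProduct_mulVec, Matrix.vecMul_mulVec, ← Matrix.dotProduct_mulVec,
      Matrix.mulVec_mulVec]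
  rw [this, h, Matrix.one_mulVec, dotProduct]
  simp [pow_two]

/-- The full-dimensional regularized least-squares objective of AF-GMRES equals the
small projected objective (equivalence of (2.10)–(2.11) and (2.12)). -/
theorem projected_objective_identity (m n p q k j : ℕ) (hp : 0 < p)
    (A : Matrix (Fin m) (Fin n) ℝ) (b : Fin m → ℝ)
    (R : Matrix (Fin m) (Fin m) ℝ) (Q : Matrix (Fin n) (Fin n) ℝ)
    (hR : R.PosDef) (hQ : Q.PosDef) (lx lξ : ℝ)
    (Vhat : Matrix (Fin m) (Fin p) ℝ)
    (hVhat : Vhatᵀ * R⁻¹ * Vhat = 1)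
    (Zhat : Matrix (Fin n) (Fin q) ℝ) (H : Matrix (Fin p) (Fin q) ℝ)
    (hAZ : A * Zhat = Vhat * H)
    (β : ℝ) (hb : b = β • Vhat.mulVec (Pi.single (⟨0, hp⟩ : Fin p) 1))
    (V Vtil : Matrix (Fin n) (Fin k) ℝ) (Htil : Matrix (Fin k) (Fin k) ℝ)
    (hV : V = Vtil * Htil) (hVtil : Vtilᵀ * Q * Vtil = 1)
    (G Q' : Matrix (Fin n) (Fin j) ℝ) (R' : Matrix (Fin j) (Fin j) ℝ)
    (hG : G = Q' * R') (hQ' : Q'ᵀ * Q' = 1) :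
    ∀ (y : Fin q → ℝ) (y1 : Fin k → ℝ) (y2 : Fin j → ℝ),
      wnormSq R⁻¹ (A.mulVec (Zhat.mulVec y) - b)
        + lx ^ 2 * wnormSq Q (V.mulVec y1)
        + lξ ^ 2 * ∑ i, (G.mulVec y2 i) ^ 2
      = ∑ i, (H.mulVec y i - β * (Pi.single (⟨0, hp⟩ : Fin p) (1 : ℝ) : Fin p → ℝ) i) ^ 2
        + lx ^ 2 * ∑ i, (Htil.mulVec y1 i) ^ 2
        + lξ ^ 2 * ∑ i, (R'.mulVec y2 i) ^ 2 := by
  intro y y1 y2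
  have e1 : A.mulVec (Zhat.mulVec y) - b
      = Vhat.mulVec (fun i => H.mulVec y i - β * (Pi.single (⟨0, hp⟩ : Fin p) (1 : ℝ) : Fin p → ℝ) i) := by
    have h1 : A.mulVec (Zhat.mulVec y) = Vhat.mulVec (H.mulVec y) := by
      simp [Matrix.mulVec_mulVec, hAZ]
    funext i
    simp only [Pi.sub_apply, h1, hb, Pi.smul_apply, smul_eq_mul]
    rw [show (fun i => H.mulVec y i - β * (Pi.single (⟨0, hp⟩ : Fin p) (1:ℝ) : Fin p → ℝ) i)
        = H.mulVec y - β • (Pi.single (⟨0, hp⟩ : Fin p) (1:ℝ) : Fin p → ℝ) from rfl]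
    rw [Matrix.mulVec_sub, Matrix.mulVec_smul]
    simp
  have e2 : V.mulVec y1 = Vtil.mulVec (Htil.mulVec y1) := by
    rw [hV, ← Matrix.mulVec_mulVec]
  have e3 : G.mulVec y2 = Q'.mulVec (R'.mulVec y2) := by
    rw [hG, ← Matrix.mulVec_mulVec]
  have t1 : wnormSq R⁻¹ (A.mulVec (Zhat.mulVec y) - b)
      = ∑ i, (H.mulVec y i - β * (Pi.single (⟨0, hp⟩ : Fin p) (1:ℝ) : Fin p → ℝ) i) ^ 2 := by
    rw [e1]; exact key_iso _ _ hVhat _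
  have t2 : wnormSq Q (V.mulVec y1) = ∑ i, (Htil.mulVec y1 i) ^ 2 := by
    rw [e2]; exact key_iso _ _ hVtil _
  have t3 : ∑ i, (G.mulVec y2 i) ^ 2 = ∑ i, (R'.mulVec y2 i) ^ 2 := by
    rw [e3]
    have := key_iso (1 : Matrix (Fin n) (Fin n) ℝ) Q' (by simpa using hQ') (R'.mulVec y2)
    rw [← this, Matrix.one_mulVec, dotProduct]
    simp [pow_two]
  rw [t1, t2, t3]
end
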